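/- Let φ : X → ℝ ∪ {∞} be a proper convex function, (x̄, v̄) ∈ gph ∂φ, and suppose z ∈ D∂φ(x̄|v̄)(w) with z ∈ T_{∂φ(x̄)}(v̄) and w ∈ T_{∂φ*(v̄)}(x̄). Then ⟨z, w⟩ = 0. -/

import Mathlib

/-!
Monotonicity of `∂φ` passes to the tangent cone of its graph, so `⟪z, w⟫ ≥ 0`.
For the reverse inequality, the Fenchel–Young equality `φ* v = ⟪v, x̄⟫ - φ x̄` for all
`v ∈ ∂φ(x̄)` makes `φ*` affine on `∂φ(x̄)`; the subgradient inequality of `φ*` at `v̄` then gives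
`⟪v - v̄, x' - x̄⟫ ≤ 0` for `v ∈ ∂φ(x̄)` and `x' ∈ ∂φ*(v̄)`, and dividing by the step sizes and
passing to the limit along the tangent sequences gives `⟪z, w⟫ ≤ 0`.
-/

open Filter Topology Metric Set
open scoped RealInnerProductSpace NNReal ENNReal

noncomputable section

/-- Bouligand (contingent) tangent cone. -/
def tanCone {G : Type*} [AddCommGroup G] [Module ℝ G] [TopologicalSpace G]
    (s : Set G) (x : G) : Set G :=
  {w | ∃ (t : ℕ → ℝ) (wk : ℕ → G), (∀ n, 0 < t n) ∧
    Tendsto t atTop (𝓝 0) ∧ Tendsto wk atTop (𝓝 w) ∧ ∀ n, x + t n • wk n ∈ s}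

variable {E F : Type*} [NormedAddCommGroup E] [InnerProductSpace ℝ E]
  [NormedAddCommGroup F] [InnerProductSpace ℝ F]

/-- Graph of a set-valued mapping. -/
def gph (S : E → Set F) : Set (E × F) := {p | p.2 ∈ S p.1}

/-- Graphical derivative. -/
def gder (S : E → Set F) (x : E) (y : F) (w : E) : Set F :=
  {z | (w, z) ∈ tanCone (gph S) (x, y)}

/-- Local closedness of the graph around a point. -/
def LocallyClosedGraph (S : E → Set F) (x : E) (y : F) : Prop :=
  ∃ U ∈ 𝓝 ((x, y) : E × F), IsClosed (U ∩ gph S)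

/-- Metric subregularity of a set-valued mapping at `x` for `y`. -/
def MetrSubreg (S : E → Set F) (x : E) (y : F) : Prop :=
  ∃ κ : ℝ≥0, ∃ ε : ℝ, 0 < ε ∧ ∀ x' ∈ ball x ε,
    EMetric.infEdist x' {u | y ∈ S u} ≤ (κ : ℝ≥0∞) * EMetric.infEdist y (S x')

/-- Convex subdifferential of an extended-real-valued function. -/
def subdiff (φ : E → EReal) (x : E) : Set E :=
  {v | ∀ u, φ x + ((⟪v, u - x⟫ : ℝ) : EReal) ≤ φ u}

/-- Properness. -/
def ProperFn (φ : E → EReal) : Prop := (∀ x, φ x ≠ ⊥) ∧ ∃ x, φ x ≠ ⊤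

/-- Convexity via the epigraph. -/
def ConvexFn (φ : E → EReal) : Prop := Convex ℝ {p : E × ℝ | φ p.1 ≤ (p.2 : EReal)}

/-- Fenchel conjugate. -/
def conjFn (φ : E → EReal) (v : E) : EReal := ⨆ x, ((⟪v, x⟫ : ℝ) : EReal) - φ x

/-- Second subderivative. -/
def secondSubderiv (φ : E → EReal) (x v w : E) : EReal :=
  Filter.liminf (fun p : ℝ × E =>
    (((2 / p.1 ^ 2 : ℝ)) : EReal) *
      (φ (x + p.1 • p.2) - φ x - ((p.1 * ⟪v, p.2⟫ : ℝ) : EReal)))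
    ((𝓝[>] (0 : ℝ)) ×ˢ 𝓝 w)

/-- Quadratic growth condition at `x` for `v`. -/
def QuadGrowth (φ : E → EReal) (x v : E) : Prop :=
  ∃ c : ℝ, 0 < c ∧ ∃ ε : ℝ, 0 < ε ∧ ∀ u ∈ ball x ε,
    φ x + ((⟪v, u - x⟫ + c / 2 * (infDist u {u' | v ∈ subdiff φ u'}) ^ 2 : ℝ) : EReal) ≤ φ u

lemma add_inner_le_of_mem_subdiff {φ : E → EReal} {x u v : E} {a b : ℝ}
    (hv : v ∈ subdiff φ x) (hx : φ x = a) (hu : φ u = b) : a + ⟪v, u - x⟫ ≤ b := by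
  have h := hv u
  rwa [hx, hu, ← EReal.coe_add, EReal.coe_le_coe_iff] at h

lemma ProperFn.exists_eq_coe_of_mem_subdiff {φ : E → EReal} (hp : ProperFn φ) {x v : E}
    (hv : v ∈ subdiff φ x) : ∃ a : ℝ, φ x = a := by
  obtain ⟨hbot, u, hu⟩ := hp
  have htop : φ x ≠ ⊤ := fun htop => hu <| top_le_iff.mp <| by
    simpa [htop, EReal.top_add_of_ne_bot] using hv u
  exact ⟨(φ x).toReal, (EReal.coe_toReal htop (hbot x)).symm⟩

lemma ProperFn.inner_sub_sub_nonneg_of_mem_subdiff {φ : E → EReal} (hp : ProperFn φ)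
    {x₁ x₂ v₁ v₂ : E} (h₁ : v₁ ∈ subdiff φ x₁) (h₂ : v₂ ∈ subdiff φ x₂) :
    0 ≤ ⟪v₁ - v₂, x₁ - x₂⟫ := by
  obtain ⟨a, ha⟩ := hp.exists_eq_coe_of_mem_subdiff h₁
  obtain ⟨b, hb⟩ := hp.exists_eq_coe_of_mem_subdiff h₂
  have i₁ := add_inner_le_of_mem_subdiff h₁ ha hb
  have i₂ := add_inner_le_of_mem_subdiff h₂ hb ha
  simp only [inner_sub_left, inner_sub_right, real_inner_comm] at i₁ i₂ ⊢
  linarith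

lemma conjFn_eq_of_mem_subdiff {φ : E → EReal} {x v : E} {a : ℝ}
    (hx : φ x = a) (hv : v ∈ subdiff φ x) : conjFn φ v = ((⟪v, x⟫ - a : ℝ) : EReal) := by
  refine le_antisymm (iSup_le fun u => ?_) ?_
  · obtain htop | hlt := eq_top_or_lt_top (φ u)
    · simp [htop]
    · have hbot : φ u ≠ ⊥ := ne_bot_of_le_ne_bot (by simp [hx]) (hv u)
      obtain ⟨b, hb⟩ : ∃ b : ℝ, φ u = b := ⟨_, (EReal.coe_toReal hlt.ne hbot).symm⟩
      have h := add_inner_le_of_mem_subdiff hv hx hb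
      rw [hb, ← EReal.coe_sub, EReal.coe_le_coe_iff]
      rw [inner_sub_right] at h
      linarith
  · rw [EReal.coe_sub, ← hx]
    exact le_iSup (fun u => ((⟪v, u⟫ : ℝ) : EReal) - φ u) x

lemma inner_sub_sub_nonpos_of_mem_subdiff_conjFn {φ : E → EReal} {x x' v v' : E} {a : ℝ}
    (hx : φ x = a) (hv : v ∈ subdiff φ x) (hv' : v' ∈ subdiff φ x)
    (hx' : x' ∈ subdiff (conjFn φ) v) : ⟪v' - v, x' - x⟫ ≤ 0 := by
  have h := add_inner_le_of_mem_subdiff hx' (conjFn_eq_of_mem_subdiff hx hv)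
    (conjFn_eq_of_mem_subdiff hx hv')
  simp only [inner_sub_left, inner_sub_right, real_inner_comm] at h ⊢
  linarith

lemma inner_nonneg_of_mem_tanCone_prod {s : Set (E × E)} {x y w z : E}
    (hmono : ∀ p ∈ s, 0 ≤ ⟪p.2 - y, p.1 - x⟫) (hwz : (w, z) ∈ tanCone s (x, y)) :
    0 ≤ ⟪z, w⟫ := by
  obtain ⟨t, p, ht, -, hp, hmem⟩ := hwz
  have key : ∀ n, 0 ≤ ⟪(p n).2, (p n).1⟫ := fun n => by
    have h := hmono _ (hmem n)
    simp only [Prod.fst_add, Prod.snd_add, Prod.smul_fst, Prod.smul_snd, add_sub_cancel_left,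
      inner_smul_left, inner_smul_right, RCLike.conj_to_real, ← mul_assoc] at h
    exact (mul_nonneg_iff_of_pos_left (mul_pos (ht n) (ht n))).mp h
  exact ge_of_tendsto' (hp.snd_nhds.inner hp.fst_nhds) key

lemma inner_nonpos_of_mem_tanCone {A B : Set E} {v x z w : E}
    (hanti : ∀ v' ∈ A, ∀ x' ∈ B, ⟪v' - v, x' - x⟫ ≤ 0)
    (hz : z ∈ tanCone A v) (hw : w ∈ tanCone B x) : ⟪z, w⟫ ≤ 0 := by
  obtain ⟨s, ζ, hs, -, hζ, hζmem⟩ := hz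
  obtain ⟨r, ω, hr, -, hω, hωmem⟩ := hw
  have key : ∀ n, ⟪ζ n, ω n⟫ ≤ 0 := fun n => by
    have h := hanti _ (hζmem n) _ (hωmem n)
    simp only [add_sub_cancel_left, inner_smul_left, inner_smul_right, RCLike.conj_to_real,
      ← mul_assoc] at h
    exact nonpos_of_mul_nonpos_right h (mul_pos (hr n) (hs n))
  exact le_of_tendsto' (hζ.inner hω) key

theorem stmt8_general {E : Type*} [NormedAddCommGroup E] [InnerProductSpace ℝ E]
    (φ : E → EReal) (hproper : ProperFn φ)
    (xb vb : E) (hsub : vb ∈ subdiff φ xb) (w z : E)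
    (hz : z ∈ gder (subdiff φ) xb vb w)
    (hzT : z ∈ tanCone (subdiff φ xb) vb)
    (hwT : w ∈ tanCone (subdiff (conjFn φ) vb) xb) :
    ⟪z, w⟫ = 0 := by
  obtain ⟨a, ha⟩ := hproper.exists_eq_coe_of_mem_subdiff hsub
  refine le_antisymm ?_ ?_
  · exact inner_nonpos_of_mem_tanCone
      (fun v hv x hx => inner_sub_sub_nonpos_of_mem_subdiff_conjFn ha hsub hv hx) hzT hwT
  · exact inner_nonneg_of_mem_tanCone_prod
      (fun p hp => hproper.inner_sub_sub_nonneg_of_mem_subdiff hp hsub) hz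

/-- if `z ∈ D∂φ(xb|vb)(w)` with `z ∈ T_{∂φ(xb)}(vb)` and
`w ∈ T_{∂φ*(vb)}(xb)`, then `⟨z,w⟩ = 0`. -/
theorem stmt8 {E : Type*} [NormedAddCommGroup E] [InnerProductSpace ℝ E]
    [FiniteDimensional ℝ E]
    (φ : E → EReal) (hproper : ProperFn φ) (hconv : ConvexFn φ)
    (xb vb : E) (hsub : vb ∈ subdiff φ xb) (w z : E)
    (hz : z ∈ gder (subdiff φ) xb vb w)
    (hzT : z ∈ tanCone (subdiff φ xb) vb)
    (hwT : w ∈ tanCone (subdiff (conjFn φ) vb) xb) :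
    ⟪z, w⟫ = 0 :=
  stmt8_general φ hproper xb vb hsub w z hz hzT hwT

end
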